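/- If w ∈ S_n is a permutation at which Υ attains its maximum over S_n (i.e. Υ_w ≥ Υ_v for all v ∈ S_n), then maj(w) ≥ ℓ(w), where maj(w) = Σ_{i ∈ Des(w)} i is the major index of w. -/

import Mathlib

/-! Stripping the last letter off a reduced word of `w` leaves a reduced word of `w s_i`,
and the letters `i` that can end a reduced word of `w` are exactly the descents of `w`.
Weighting by the product of letters this gives `ℓ(w) Υ_w = ∑_{i ∈ Des(w)} i Υ_{w s_i}`.
At a maximum of `Υ` every `Υ_{w s_i}` is at most `Υ_w`, so `ℓ(w) Υ_w ≤ maj(w) Υ_w`,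
and `Υ_w ≥ Υ_id = 1 > 0`. -/

open Equiv Finset

namespace Schubert

variable {n : ℕ}

/-- Number of inversions of a permutation of `{0,...,n-1}`. -/
def len (w : Perm (Fin n)) : ℕ :=
  (Finset.univ.filter (fun p : Fin n × Fin n => p.1 < p.2 ∧ w p.2 < w p.1)).card

/-- One-based application: `app w i = w(i)` for `1 ≤ i ≤ n` (junk otherwise). -/
def app (w : Perm (Fin n)) (i : ℕ) : ℕ :=
  if h : i - 1 < n then ((w ⟨i - 1, h⟩ : Fin n) : ℕ) + 1 else i

/-- The adjacent transposition `s_i` (one-based), swapping positions `i` and `i+1`. -/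
def s (n : ℕ) (i : ℕ) : Perm (Fin n) :=
  if h : 1 ≤ i ∧ i < n then Equiv.swap ⟨i - 1, by omega⟩ ⟨i, h.2⟩ else 1

/-- The transposition `t_(a,b)` (one-based), swapping positions `a` and `b`. -/
def t (n : ℕ) (a b : ℕ) : Perm (Fin n) :=
  if h : 1 ≤ a ∧ a ≤ n ∧ 1 ≤ b ∧ b ≤ n then
    Equiv.swap ⟨a - 1, by omega⟩ ⟨b - 1, by omega⟩ else 1

/-- The longest permutation `w_0 = (n, n-1, ..., 1)`. -/
def w0 (n : ℕ) : Perm (Fin n) where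
  toFun i := ⟨n - 1 - i.val, by have := i.isLt; omega⟩
  invFun i := ⟨n - 1 - i.val, by have := i.isLt; omega⟩
  left_inv i := by have := i.isLt; apply Fin.ext; show n - 1 - (n - 1 - i.val) = i.val; omega
  right_inv i := by have := i.isLt; apply Fin.ext; show n - 1 - (n - 1 - i.val) = i.val; omega

/-- Descent set (one-based): `Des(w) = {i ∈ {1,...,n-1} : w(i) > w(i+1)}`. -/
def des (w : Perm (Fin n)) : Finset ℕ :=
  (Finset.Icc 1 (n - 1)).filter (fun i => app w (i + 1) < app w i)

/-- Major index. -/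
def maj (w : Perm (Fin n)) : ℕ := ∑ i ∈ des w, i

open Classical in
/-- The principal Schubert specialization
`Υ_w = 𝔖_w(1,...,1) = (1/ℓ(w)!) ∑_{(a_1,...,a_{ℓ(w)}) ∈ R(w)} a_1 ⋯ a_{ℓ(w)}`,
where a reduced word for `w` is a word of length `ℓ(w)` in letters `1,...,n-1`
whose product of adjacent transpositions is `w`. -/
noncomputable def Upsilon (w : Perm (Fin n)) : ℚ :=
  (∑ f : Fin (len w) → Fin (n - 1),
      if (List.ofFn (fun j => s n ((f j : ℕ) + 1))).prod = w then
        ∏ j, ((f j : ℚ) + 1)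
      else 0)
    / (len w).factorial

def inversions (w : Perm (Fin n)) : Finset (Fin n × Fin n) :=
  univ.filter fun p => p.1 < p.2 ∧ w p.2 < w p.1

lemma len_eq_card_inversions (w : Perm (Fin n)) : len w = #(inversions w) := rfl

lemma swap_succ_lt_swap_succ_iff {a b p q : Fin n} (hab : (b : ℕ) = a + 1) (hne : p ≠ q)
    (hpq : ¬(p = a ∧ q = b)) (hqp : ¬(p = b ∧ q = a)) :
    swap a b p < swap a b q ↔ p < q := by
  rw [swap_apply_def, swap_apply_def, Fin.lt_def, Fin.lt_def]
  split_ifs <;> simp_all [Fin.ext_iff] <;> omega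

lemma len_mul_swap_succ {v : Perm (Fin n)} {a b : Fin n} (hab : (b : ℕ) = a + 1)
    (hv : v a < v b) : len (v * swap a b) = len v + 1 := by
  have hba : b ≠ a := by intro h; rw [h] at hab; omega
  have hba_mem : (b, a) ∉ inversions v := fun h => by
    have hlt : b < a := (mem_filter.1 h).2.1
    rw [Fin.lt_def] at hlt
    omega
  rw [len_eq_card_inversions, len_eq_card_inversions, ← card_insert_of_notMem hba_mem]
  calc #(inversions (v * swap a b))
      = #(univ.filter fun p : Fin n × Fin n => swap a b p.1 < swap a b p.2 ∧ v p.2 < v p.1) :=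
        card_equiv ((swap a b).prodCongr (swap a b)) fun p => by
          rw [inversions, mem_filter, mem_filter]
          simp only [mem_univ, true_and, prodCongr_apply, Prod.map_fst,
            Prod.map_snd, swap_apply_self, Perm.mul_apply]
    _ = #(insert (b, a) (inversions v)) := by
        congr 1
        ext ⟨p, q⟩
        simp only [inversions, mem_filter, mem_univ, true_and, mem_insert, Prod.mk.injEq]
        by_cases hpq : p = q
        · subst hpq; simp only [lt_self_iff_false, false_and]; grind
        by_cases h1 : p = a ∧ q = b
        · obtain ⟨rfl, rfl⟩ := h1
          simp [hba, hv.not_gt]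
        by_cases h2 : p = b ∧ q = a
        · obtain ⟨rfl, rfl⟩ := h2
          simp [hv, Fin.lt_def, hab]
        rw [swap_succ_lt_swap_succ_iff hab hpq h1 h2]
        tauto

lemma len_one : len (1 : Perm (Fin n)) = 0 :=
  card_eq_zero.2 <| filter_eq_empty_iff.2 fun _ _ h => h.1.asymm h.2

lemma s_mul_self (i : ℕ) : s n i * s n i = 1 := by
  unfold s
  split_ifs
  exacts [swap_mul_self _ _, one_mul 1]

lemma s_inv (i : ℕ) : (s n i)⁻¹ = s n i := inv_eq_of_mul_eq_one_right (s_mul_self i)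

lemma s_eq_swap {i : ℕ} (h1 : 1 ≤ i) (h2 : i < n) :
    s n i = swap ⟨i - 1, by omega⟩ ⟨i, h2⟩ := by
  rw [s, dif_pos ⟨h1, h2⟩]

lemma app_of_pos {w : Perm (Fin n)} {i : ℕ} (h1 : 1 ≤ i) (h2 : i ≤ n) :
    app w i = w ⟨i - 1, by omega⟩ + 1 := by
  rw [app, dif_pos (by omega)]

lemma app_succ {w : Perm (Fin n)} {i : ℕ} (h : i < n) : app w (i + 1) = w ⟨i, h⟩ + 1 := by
  simp [app, h]

lemma len_mul_s_of_not_descent {w : Perm (Fin n)} {i : ℕ} (h1 : 1 ≤ i) (h2 : i < n)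
    (hasc : ¬app w (i + 1) < app w i) : len (w * s n i) = len w + 1 := by
  rw [app_succ h2, app_of_pos h1 h2.le] at hasc
  rw [s_eq_swap h1 h2]
  refine len_mul_swap_succ (by simp; omega) (lt_of_le_of_ne (by rw [Fin.le_def]; omega) ?_)
  intro h
  have := congrArg Fin.val (w.injective h)
  simp only at this
  omega

lemma len_mul_s_of_descent {w : Perm (Fin n)} {i : ℕ} (h1 : 1 ≤ i) (h2 : i < n)
    (hdes : app w (i + 1) < app w i) : len (w * s n i) + 1 = len w := by
  rw [app_succ h2, app_of_pos h1 h2.le] at hdes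
  have hv : (w * s n i) ⟨i - 1, by omega⟩ < (w * s n i) ⟨i, h2⟩ := by
    rw [s_eq_swap h1 h2, Perm.mul_apply, Perm.mul_apply, swap_apply_left, swap_apply_right,
      Fin.lt_def]
    omega
  have := len_mul_swap_succ (by simp; omega) hv
  rwa [← s_eq_swap h1 h2, mul_assoc, s_mul_self, mul_one, eq_comm] at this

lemma len_mul_s_le (w : Perm (Fin n)) (i : ℕ) : len (w * s n i) ≤ len w + 1 := by
  by_cases h : 1 ≤ i ∧ i < n
  · by_cases hdes : app w (i + 1) < app w i
    · have := len_mul_s_of_descent h.1 h.2 hdes; omega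
    · exact (len_mul_s_of_not_descent h.1 h.2 hdes).le
  · rw [s, dif_neg h, mul_one]; omega

lemma len_prod_map_s_le (l : List ℕ) : len (l.map (s n)).prod ≤ l.length := by
  induction l using List.reverseRecOn with
  | nil => simp [len_one]
  | append_singleton l i ih =>
    simpa using (len_mul_s_le (l.map (s n)).prod i).trans (Nat.add_le_add_right ih 1)

noncomputable def wordWeight {m : ℕ} (v : Perm (Fin n)) (f : Fin m → Fin (n - 1)) : ℚ :=
  if (List.ofFn (fun j => s n ((f j : ℕ) + 1))).prod = v then ∏ j, ((f j : ℚ) + 1) else 0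

noncomputable def weightedWordSum (v : Perm (Fin n)) (m : ℕ) : ℚ :=
  ∑ f : Fin m → Fin (n - 1), wordWeight v f

lemma Upsilon_eq_weightedWordSum (v : Perm (Fin n)) :
    Upsilon v = weightedWordSum v (len v) / (len v).factorial := rfl

lemma weightedWordSum_eq_zero_of_lt_len {v : Perm (Fin n)} {m : ℕ} (hm : m < len v) :
    weightedWordSum v m = 0 := by
  refine sum_eq_zero fun f _ => if_neg fun hprod => hm.not_ge ?_
  have := len_prod_map_s_le (n := n) (List.ofFn fun j => (f j : ℕ) + 1)
  rwa [List.map_ofFn, List.length_ofFn, Function.comp_def, hprod] at this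

lemma wordWeight_snoc {m : ℕ} (v : Perm (Fin n)) (g : Fin m → Fin (n - 1)) (x : Fin (n - 1)) :
    wordWeight v (Fin.snoc (α := fun _ => Fin (n - 1)) g x) =
      ((x : ℚ) + 1) * wordWeight (v * s n (x + 1)) g := by
  simp only [wordWeight, List.ofFn_succ', Fin.snoc_castSucc, Fin.snoc_last, List.prod_concat,
    Fin.prod_univ_castSucc, ← eq_mul_inv_iff_mul_eq, s_inv]
  split_ifs <;> ring

lemma weightedWordSum_succ (v : Perm (Fin n)) (m : ℕ) :
    weightedWordSum v (m + 1) =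
      ∑ i ∈ Icc 1 (n - 1), (i : ℚ) * weightedWordSum (v * s n i) m := by
  rw [weightedWordSum, ← (Fin.snocEquiv fun _ => Fin (n - 1)).sum_comp, Fintype.sum_prod_type]
  simp only [Fin.snocEquiv, coe_fn_mk, wordWeight_snoc, ← mul_sum, ← weightedWordSum.eq_1]
  rw [Fin.sum_univ_eq_sum_range (fun x => ((x : ℚ) + 1) * weightedWordSum (v * s n (x + 1)) m),
    ← Ico_add_one_right_eq_Icc, sum_Ico_eq_sum_range, Nat.add_sub_cancel]
  refine sum_congr rfl fun k _ => ?_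
  rw [add_comm 1 k]
  push_cast
  rfl

lemma len_mul_s_add_one_of_mem_des {w : Perm (Fin n)} {i : ℕ} (hi : i ∈ des w) :
    len (w * s n i) + 1 = len w := by
  obtain ⟨hrange, hdes⟩ := mem_filter.1 hi
  rw [mem_Icc] at hrange
  exact len_mul_s_of_descent hrange.1 (by omega) hdes

lemma len_mul_s_of_notMem_des {w : Perm (Fin n)} {i : ℕ} (hrange : i ∈ Icc 1 (n - 1))
    (hi : i ∉ des w) : len (w * s n i) = len w + 1 := by
  have := mem_Icc.1 hrange
  exact len_mul_s_of_not_descent this.1 (by omega) fun hdes => hi (mem_filter.2 ⟨hrange, hdes⟩)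

theorem len_mul_Upsilon (w : Perm (Fin n)) :
    (len w : ℚ) * Upsilon w = ∑ i ∈ des w, (i : ℚ) * Upsilon (w * s n i) := by
  rcases hlen : len w with _ | m
  · rw [Nat.cast_zero, zero_mul]
    exact (sum_eq_zero fun i hi => absurd (len_mul_s_add_one_of_mem_des hi) (by omega)).symm
  have hvanish : ∀ i ∈ Icc 1 (n - 1), i ∉ des w →
      (i : ℚ) * weightedWordSum (w * s n i) m = 0 :=
    fun i hrange hi => by
      rw [weightedWordSum_eq_zero_of_lt_len (by rw [len_mul_s_of_notMem_des hrange hi]; omega),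
        mul_zero]
  have hdes : ∀ i ∈ des w, Upsilon (w * s n i) = weightedWordSum (w * s n i) m / m.factorial :=
    fun i hi => by
      rw [Upsilon_eq_weightedWordSum, (by have := len_mul_s_add_one_of_mem_des hi; omega :
        len (w * s n i) = m)]
  calc ((m + 1 : ℕ) : ℚ) * Upsilon w
      = (∑ i ∈ des w, (i : ℚ) * weightedWordSum (w * s n i) m) / m.factorial := by
        rw [Upsilon_eq_weightedWordSum, hlen, weightedWordSum_succ,
          ← sum_subset (show des w ⊆ Icc 1 (n - 1) from filter_subset _ _) hvanish,
          Nat.factorial_succ]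
        push_cast
        field_simp
    _ = ∑ i ∈ des w, (i : ℚ) * Upsilon (w * s n i) := by
        rw [sum_div]
        exact sum_congr rfl fun i hi => by rw [hdes i hi, mul_div_assoc]

lemma Upsilon_one : Upsilon (1 : Perm (Fin n)) = 1 := by
  rw [Upsilon_eq_weightedWordSum, len_one]
  simp [weightedWordSum, wordWeight]

/-- if `Υ` attains its maximum over `S_n` at `w`, then
`maj(w) ≥ ℓ(w)`. -/
theorem maj_ge_len_of_max (n : ℕ) (w : Perm (Fin n))
    (hmax : ∀ v : Perm (Fin n), Upsilon v ≤ Upsilon w) :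
    len w ≤ maj w := by
  have hpos : 0 < Upsilon w := one_pos.trans_le (Upsilon_one ▸ hmax 1)
  have hle : (len w : ℚ) * Upsilon w ≤ maj w * Upsilon w := by
    rw [len_mul_Upsilon, maj, Nat.cast_sum, sum_mul]
    exact sum_le_sum fun i _ => mul_le_mul_of_nonneg_left (hmax _) (Nat.cast_nonneg i)
  exact_mod_cast le_of_mul_le_mul_right hle hpos

end Schubert
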